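/- arXiv:1410.0201 — 3 statements merged into one kernel-verified Lean document; each statement's English description precedes it below -/
import Mathlib

section
/- Quadrature satisfies B(p): Let t ∈ ℝⁿ, t₀, t_f ∈ ℝ, h = t_f − t₀ ≠ 0, c = (t − t₀𝟙)/h, and w ∈ ℝⁿ a quadrature rule satisfying wᵀ t^k = (t_f^{k+1} − t₀^{k+1})/(k+1) for all 0 ≤ k ≤ τ−1. Define b = w/h. Then bᵀ c^{j−1} = 1/j for all 1 ≤ j ≤ τ. -/
/-!
A weight vector that integrates the monomials `x ^ k`, `k < τ`, exactly over `[t₀, t_f]` integrates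
every polynomial of degree `< τ` exactly, in particular `(x - t₀) ^ (j - 1)`, whose integral is
`h ^ j / j`. Rescaling the nodes and the weights by `1 / h` turns this into `1 / j`.
-/

open Matrix Polynomial

section Quadrature

variable {ι : Type*} [Fintype ι] {w x : ι → ℝ} {a b : ℝ} {τ : ℕ}

theorem dotProduct_eval_eq_integral_of_dotProduct_pow_eq
    (hexact : ∀ k < τ, w ⬝ᵥ (fun i => x i ^ k) = ∫ y in a..b, y ^ k)
    {P : ℝ[X]} (hP : P.natDegree < τ) :
    w ⬝ᵥ (fun i => P.eval (x i)) = ∫ y in a..b, P.eval y := by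
  have hsum : (fun i => P.eval (x i)) = ∑ k ∈ Finset.range τ, P.coeff k • fun i => x i ^ k := by
    ext i
    simp [eval_eq_sum_range' hP]
  simp_rw [hsum, dotProduct_sum, dotProduct_smul, eval_eq_sum_range' hP]
  rw [intervalIntegral.integral_finsetSum
    fun k _ => (intervalIntegral.intervalIntegrable_pow k).const_mul _]
  refine Finset.sum_congr rfl fun k hk => ?_
  rw [hexact k (Finset.mem_range.mp hk), intervalIntegral.integral_const_mul, smul_eq_mul]

theorem dotProduct_sub_pow_eq_of_dotProduct_pow_eq
    (hexact : ∀ k < τ, w ⬝ᵥ (fun i => x i ^ k) = ∫ y in a..b, y ^ k) {p : ℕ} (hp : p < τ) :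
    w ⬝ᵥ (fun i => (x i - a) ^ p) = (b - a) ^ (p + 1) / (p + 1) := by
  have hP : ((X - C a) ^ p).natDegree < τ := by
    rwa [natDegree_pow, natDegree_X_sub_C, mul_one]
  simpa [intervalIntegral.integral_comp_sub_right (fun y => y ^ p) a, integral_pow]
    using dotProduct_eval_eq_integral_of_dotProduct_pow_eq hexact hP

end Quadrature

theorem gsbp_quadrature_Bp {n τ : ℕ}
    (t : Fin n → ℝ) (t0 tf : ℝ) (h : ℝ) (hdef : h = tf - t0) (hh : h ≠ 0)
    (c : Fin n → ℝ) (hc : c = fun i => (t i - t0) / h)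
    (w b : Fin n → ℝ)
    (hw : ∀ k : ℕ, k + 1 ≤ τ →
      w ⬝ᵥ (fun i => t i ^ k) = (tf ^ (k + 1) - t0 ^ (k + 1)) / (k + 1))
    (hb : b = (1 / h) • w) :
    ∀ j : ℕ, 1 ≤ j → j ≤ τ → b ⬝ᵥ (fun i => c i ^ (j - 1)) = 1 / j := by
  rintro j hj hjτ
  obtain ⟨p, rfl⟩ : ∃ p, j = p + 1 := ⟨j - 1, by omega⟩
  subst hb hc
  have hexact : ∀ k < τ, w ⬝ᵥ (fun i => t i ^ k) = ∫ y in t0..tf, y ^ k := fun k hk => by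
    rw [integral_pow, hw k hk]
  have hshift : w ⬝ᵥ (fun i => (t i - t0) ^ p) = h ^ (p + 1) / (p + 1) := by
    rw [hdef]
    exact dotProduct_sub_pow_eq_of_dotProduct_pow_eq hexact (by omega)
  have hscale : (fun i => ((t i - t0) / h) ^ p) = (1 / h) ^ p • fun i => (t i - t0) ^ p := by
    ext i
    rw [Pi.smul_apply, smul_eq_mul, div_eq_mul_one_div, mul_pow, mul_comm]
  calc ((1 / h) • w) ⬝ᵥ (fun i => ((t i - t0) / h) ^ (p + 1 - 1))
      = (1 / h) ^ (p + 1) * w ⬝ᵥ (fun i => (t i - t0) ^ p) := by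
        rw [Nat.add_sub_cancel, hscale, smul_dotProduct, dotProduct_smul, smul_eq_mul,
          smul_eq_mul, pow_succ]
        ring
    _ = 1 / (p + 1 : ℕ) := by
        rw [hshift, _root_.one_div_pow, ← mul_div_assoc, one_div_mul_cancel (pow_ne_zero _ hh)]
        push_cast
        rfl
end

section
/- Stage order condition C(q): Let H be symmetric positive definite, Θ an n×n matrix with M = Θ + χ₀χ₀ᵀ invertible, D = H⁻¹Θ, and c the rescaled abscissa with scale h ≠ 0. Assume D c^j = (j/h) c^{j−1} for 1 ≤ j ≤ q and χ₀ᵀ c^j = 0 for 1 ≤ j ≤ q. Then A := (1/h) M⁻¹ H satisfies A c^{j−1} = c^j / j for all 1 ≤ j ≤ q. -/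
/-!
Since `H` is invertible, `Θ = H D`, and since `χ₀ ⬝ᵥ c^j = 0` the rank-one term of `M`
annihilates `c^j`. Hence `M c^j = Θ c^j = H D c^j = (j / h) H c^{j-1}`, and applying
`(1/h) M⁻¹` gives `A c^{j-1} = c^j / j`.
-/

open Matrix

section

variable {m K : Type*} [Fintype m]

theorem mulVec_eq_mulVec_of_inv_mul_mulVec_eq [DecidableEq m] [CommRing K]
    {H Θ : Matrix m m K} {v w : m → K} (hH : IsUnit H.det) (hw : (H⁻¹ * Θ) *ᵥ v = w) :
    Θ *ᵥ v = H *ᵥ w := by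
  rw [← hw, mulVec_mulVec, mul_nonsing_inv_cancel_left _ _ hH]

theorem add_vecMulVec_mulVec_of_dotProduct_eq_zero [CommRing K] (Θ : Matrix m m K)
    (u : m → K) {v w : m → K} (hvw : v ⬝ᵥ w = 0) :
    (Θ + vecMulVec u v) *ᵥ w = Θ *ᵥ w := by
  rw [add_mulVec, vecMulVec_mulVec, hvw, MulOpposite.op_zero, zero_smul, add_zero]

theorem inv_mul_mulVec_eq_of_mulVec_eq_smul [DecidableEq m] [Field K]
    {M H : Matrix m m K} {x y : m → K} {a : K}
    (hM : IsUnit M.det) (ha : a ≠ 0) (hxy : M *ᵥ x = a • (H *ᵥ y)) :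
    (M⁻¹ * H) *ᵥ y = a⁻¹ • x := by
  have hy : H *ᵥ y = a⁻¹ • (M *ᵥ x) := by
    rw [hxy, smul_smul, inv_mul_cancel₀ ha, one_smul]
  rw [← mulVec_mulVec, hy, mulVec_smul, mulVec_mulVec, nonsing_inv_mul _ hM, one_mulVec]

end

theorem gsbp_stage_order_Cq {n q : ℕ}
    (H Θ : Matrix (Fin n) (Fin n) ℝ) (χ0 : Fin n → ℝ)
    (hH : H.PosDef)
    (M : Matrix (Fin n) (Fin n) ℝ) (hM : M = Θ + vecMulVec χ0 χ0)
    (hMinv : IsUnit M.det)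
    (D : Matrix (Fin n) (Fin n) ℝ) (hD : D = H⁻¹ * Θ)
    (h : ℝ) (hh : h ≠ 0) (c : Fin n → ℝ)
    (hDc : ∀ j : ℕ, 1 ≤ j → j ≤ q →
      D *ᵥ (fun i => c i ^ j) = fun i => ((j : ℝ) / h) * c i ^ (j - 1))
    (hX : ∀ j : ℕ, 1 ≤ j → j ≤ q → χ0 ⬝ᵥ (fun i => c i ^ j) = 0)
    (A : Matrix (Fin n) (Fin n) ℝ) (hA : A = (1 / h) • (M⁻¹ * H)) :
    ∀ j : ℕ, 1 ≤ j → j ≤ q →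
      A *ᵥ (fun i => c i ^ (j - 1)) = fun i => c i ^ j / j := by
  intro j hj1 hjq
  have hj : (j : ℝ) ≠ 0 := Nat.cast_ne_zero.mpr (by omega)
  have hΘ : Θ *ᵥ (fun i => c i ^ j) = H *ᵥ (((j : ℝ) / h) • fun i => c i ^ (j - 1)) :=
    mulVec_eq_mulVec_of_inv_mul_mulVec_eq (isUnit_iff_isUnit_det H |>.mp hH.isUnit)
      (hD ▸ hDc j hj1 hjq)
  have hMc : M *ᵥ (fun i => c i ^ j) = ((j : ℝ) / h) • (H *ᵥ fun i => c i ^ (j - 1)) := by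
    rw [hM, add_vecMulVec_mulVec_of_dotProduct_eq_zero _ _ (hX j hj1 hjq), hΘ, mulVec_smul]
  rw [hA, smul_mulVec,
    inv_mul_mulVec_eq_of_mulVec_eq_smul hMinv (div_ne_zero hj hh) hMc, smul_smul]
  funext i
  simp only [Pi.smul_apply, smul_eq_mul]
  field_simp
end

section
/- Solution update formula: Under the hypotheses of the previous statement, and additionally χ_fᵀ M⁻¹ = 𝟙ᵀ and χ_fᵀ 𝟙 = 1, the projected solution ỹ = χ_fᵀ y satisfies ỹ = ỹ₀ + 𝟙ᵀ H f. -/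
open Matrix

theorem gsbp_solution_update {n : ℕ}
    (H Θ : Matrix (Fin n) (Fin n) ℝ) (χ0 χf : Fin n → ℝ)
    (M : Matrix (Fin n) (Fin n) ℝ) (hM : M = Θ + vecMulVec χ0 χ0)
    (hMinv : IsUnit M.det)
    (hU : M⁻¹ *ᵥ χ0 = (fun _ => 1))
    (hB : χf ᵥ* M⁻¹ = (fun _ => 1))
    (hones : χf ⬝ᵥ (fun _ => (1 : ℝ)) = 1)
    (hHinv : IsUnit H.det)
    (y f : Fin n → ℝ) (y0 : ℝ)
    (hy : y = y0 • (fun _ => (1 : ℝ)) + (M⁻¹ * H) *ᵥ f) :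
    χf ⬝ᵥ y = y0 + (fun _ => (1 : ℝ)) ⬝ᵥ (H *ᵥ f) := by
  subst hy
  rw [dotProduct_add, dotProduct_smul, smul_eq_mul, hones, mul_one,
    ← mulVec_mulVec, dotProduct_mulVec, hB]
end
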